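/- arXiv:2603.15311 — 4 statements merged into one kernel-verified Lean document; each statement's English description precedes it below -/
import Mathlib

section
/- Let D₁, D₂ > 0, λ > 0, φ ∈ (0, π], and θ', α ∈ (-π/2, π/2) with θ'·α < 0. Define r_a = π(D₁cos θ' + D₂cos α)²/(4λφ) + |D₁ sin θ' - D₂ sin α|/2 and r_b = π(D₁cos θ' - D₂cos α)²/(4λφ) + |D₁ sin θ' + D₂ sin α|/2. Then r_a > r_b. -/
open Real

theorem case_a_dominates_opposite_signs
    (D₁ D₂ lam φ θ' α : ℝ)
    (hD₁ : 0 < D₁) (hD₂ : 0 < D₂) (hlam : 0 < lam)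
    (hφ : φ ∈ Set.Ioc (0 : ℝ) π)
    (hθ' : θ' ∈ Set.Ioo (-(π / 2)) (π / 2))
    (hα : α ∈ Set.Ioo (-(π / 2)) (π / 2))
    (hsign : θ' * α < 0) :
    π * (D₁ * Real.cos θ' + D₂ * Real.cos α) ^ 2 / (4 * lam * φ)
        + |D₁ * Real.sin θ' - D₂ * Real.sin α| / 2
      > π * (D₁ * Real.cos θ' - D₂ * Real.cos α) ^ 2 / (4 * lam * φ)
        + |D₁ * Real.sin θ' + D₂ * Real.sin α| / 2 := by
  obtain ⟨hφ1, hφ2⟩ := hφ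
  obtain ⟨hθ1, hθ2⟩ := hθ'
  obtain ⟨hα1, hα2⟩ := hα
  have hcθ : 0 < Real.cos θ' := Real.cos_pos_of_mem_Ioo ⟨hθ1, hθ2⟩
  have hcα : 0 < Real.cos α := Real.cos_pos_of_mem_Ioo ⟨hα1, hα2⟩
  set s1 := D₁ * Real.sin θ' with hs1
  set s2 := D₂ * Real.sin α with hs2
  have hpi := Real.pi_gt_three
  have hopp : s1 * s2 < 0 := by
    rcases mul_neg_iff.mp hsign with ⟨h1, h2⟩ | ⟨h1, h2⟩
    · have hp : 0 < Real.sin θ' := Real.sin_pos_of_pos_of_lt_pi h1 (by linarith)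
      have hn : Real.sin α < 0 := Real.sin_neg_of_neg_of_neg_pi_lt h2 (by linarith)
      have : 0 < s1 := mul_pos hD₁ hp
      have : s2 < 0 := mul_neg_of_pos_of_neg hD₂ hn
      exact mul_neg_of_pos_of_neg ‹0 < s1› this
    · have hn : Real.sin θ' < 0 := Real.sin_neg_of_neg_of_neg_pi_lt h1 (by linarith)
      have hp : 0 < Real.sin α := Real.sin_pos_of_pos_of_lt_pi h2 (by linarith)
      have h1' : s1 < 0 := mul_neg_of_pos_of_neg hD₁ hn
      have h2' : 0 < s2 := mul_pos hD₂ hp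
      exact mul_neg_of_neg_of_pos h1' h2'
  have habs : |s1 + s2| ≤ |s1 - s2| := by
    have h1 := sq_abs (s1 + s2)
    have h2 := sq_abs (s1 - s2)
    nlinarith [abs_nonneg (s1 + s2), abs_nonneg (s1 - s2)]
  have hden : 0 < 4 * lam * φ := by positivity
  have hkey : π * (D₁ * Real.cos θ' - D₂ * Real.cos α) ^ 2 / (4 * lam * φ)
      < π * (D₁ * Real.cos θ' + D₂ * Real.cos α) ^ 2 / (4 * lam * φ) := by
    have hmul : π * (D₁ * Real.cos θ' - D₂ * Real.cos α) ^ 2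
        < π * (D₁ * Real.cos θ' + D₂ * Real.cos α) ^ 2 := by
      nlinarith [Real.pi_pos, mul_pos (mul_pos hD₁ hcθ) (mul_pos hD₂ hcα)]
    gcongr
  linarith
end

section
/- Let D₁, D₂ > 0, λ > 0, φ ∈ (0, π], and θ, α ∈ ℝ. Define the ULA off-boresight near-field distance r_L2L = π(D₁cos(θ-α) + D₂cos α)²/(4λφ) and the diagonal-matched UPA near-field distance r_P2P = π(D₁+D₂)²/(8λφ) + π(D₁cos(θ-α) + D₂cos α)²/(8λφ). Then r_P2P - r_L2L = π(D₁sin(θ-α) + D₂sin α)²/(8λφ) + πD₁D₂(1 - cos(2α-θ))/(4λφ) ≥ 0. -/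
open Real

theorem diag_matched_UPA_vs_ULA
    (D₁ D₂ lam φ θ α : ℝ)
    (hD₁ : 0 < D₁) (hD₂ : 0 < D₂) (hlam : 0 < lam)
    (hφ : φ ∈ Set.Ioc (0 : ℝ) π) :
    (π * (D₁ + D₂) ^ 2 / (8 * lam * φ)
        + π * (D₁ * Real.cos (θ - α) + D₂ * Real.cos α) ^ 2 / (8 * lam * φ))
      - π * (D₁ * Real.cos (θ - α) + D₂ * Real.cos α) ^ 2 / (4 * lam * φ)
    = π * (D₁ * Real.sin (θ - α) + D₂ * Real.sin α) ^ 2 / (8 * lam * φ)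
        + π * D₁ * D₂ * (1 - Real.cos (2 * α - θ)) / (4 * lam * φ)
    ∧ 0 ≤ π * (D₁ * Real.sin (θ - α) + D₂ * Real.sin α) ^ 2 / (8 * lam * φ)
        + π * D₁ * D₂ * (1 - Real.cos (2 * α - θ)) / (4 * lam * φ) := by
  have hφ0 : 0 < φ := hφ.1
  have hπ : 0 < π := Real.pi_pos
  have hc : Real.cos (2 * α - θ)
      = Real.cos (θ - α) * Real.cos α + Real.sin (θ - α) * Real.sin α := by
    have : 2 * α - θ = -((θ - α) - α) := by ring
    rw [this, Real.cos_neg, Real.cos_sub]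
  constructor
  · have h1 := Real.sin_sq_add_cos_sq (θ - α)
    have h2 := Real.sin_sq_add_cos_sq α
    rw [hc]
    field_simp
    linear_combination (-4*D₁^2)*h1 + (-4*D₂^2)*h2
  · have hcos : Real.cos (2 * α - θ) ≤ 1 := Real.cos_le_one _
    have h1 : 0 ≤ π * (D₁ * Real.sin (θ - α) + D₂ * Real.sin α) ^ 2 / (8 * lam * φ) := by
      positivity
    have h2 : 0 ≤ π * D₁ * D₂ * (1 - Real.cos (2 * α - θ)) / (4 * lam * φ) := by
      apply div_nonneg _ (by positivity)
      have : 0 ≤ 1 - Real.cos (2 * α - θ) := by linarith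
      positivity
    linarith
end

section
/- Let D₁, D₂ > 0 and θ, φ ∈ ℝ. Then the maximum over d_i, d_j ∈ [-D₁/2, D₁/2] and d_m, d_n ∈ [-D₂/2, D₂/2] of (d_m - d_i·cos φ - d_j·sin φ·sin θ)² + (d_n - d_j·cos θ)² equals (D₂ + D₁(|cos φ| + |sin θ·sin φ|))²/4 + (D₂ + D₁|cos θ|)²/4. -/
theorem P2P_onboresight_max (D₁ D₂ θ φ : ℝ) (hD₁ : 0 < D₁) (hD₂ : 0 < D₂) :
    IsGreatest
      {v : ℝ | ∃ di ∈ Set.Icc (-(D₁ / 2)) (D₁ / 2), ∃ dj ∈ Set.Icc (-(D₁ / 2)) (D₁ / 2),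
        ∃ dm ∈ Set.Icc (-(D₂ / 2)) (D₂ / 2), ∃ dn ∈ Set.Icc (-(D₂ / 2)) (D₂ / 2),
        v = (dm - di * Real.cos φ - dj * Real.sin φ * Real.sin θ) ^ 2
            + (dn - dj * Real.cos θ) ^ 2}
      ((D₂ + D₁ * (|Real.cos φ| + |Real.sin θ * Real.sin φ|)) ^ 2 / 4
        + (D₂ + D₁ * |Real.cos θ|) ^ 2 / 4) := by
  have hcomm : Real.sin θ * Real.sin φ = Real.sin φ * Real.sin θ := mul_comm _ _
  rw [hcomm]
  set cφ := Real.cos φ with hcφ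
  set ss := Real.sin φ * Real.sin θ with hss
  set cθ := Real.cos θ with hcθ
  constructor
  · -- membership
    set di := if 0 ≤ cφ then -(D₁/2) else D₁/2 with hdi
    set dj := if 0 ≤ ss then -(D₁/2) else D₁/2 with hdj
    set dn := if 0 ≤ dj * cθ then -(D₂/2) else D₂/2 with hdn
    have hmemi : di ∈ Set.Icc (-(D₁/2)) (D₁/2) := by
      rw [hdi]; split_ifs <;> constructor <;> linarith
    have hmemj : dj ∈ Set.Icc (-(D₁/2)) (D₁/2) := by
      rw [hdj]; split_ifs <;> constructor <;> linarith
    have hmemm : (D₂/2 : ℝ) ∈ Set.Icc (-(D₂/2)) (D₂/2) := by constructor <;> linarith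
    have hmemn : dn ∈ Set.Icc (-(D₂/2)) (D₂/2) := by
      rw [hdn]; split_ifs <;> constructor <;> linarith
    refine ⟨di, hmemi, dj, hmemj, D₂/2, hmemm, dn, hmemn, ?_⟩
    have h1 : -(di * cφ) = D₁/2 * |cφ| := by
      rw [hdi]; split_ifs with h
      · rw [abs_of_nonneg h]; ring
      · rw [abs_of_neg (not_le.mp h)]; ring
    have h2 : -(dj * ss) = D₁/2 * |ss| := by
      rw [hdj]; split_ifs with h
      · rw [abs_of_nonneg h]; ring
      · rw [abs_of_neg (not_le.mp h)]; ring
    have h3 : (dn - dj * cθ) ^ 2 = (D₂/2 + D₁/2 * |cθ|) ^ 2 := by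
      have habsj : |dj| = D₁/2 := by
        rw [hdj]; split_ifs
        · rw [abs_neg, abs_of_pos (by linarith)]
        · rw [abs_of_pos (by linarith)]
      have habs : |dj * cθ| = D₁/2 * |cθ| := by rw [abs_mul, habsj]
      rw [hdn]; split_ifs with h
      · have : dj * cθ = D₁/2 * |cθ| := by rw [← habs, abs_of_nonneg h]
        rw [this]; ring
      · have : dj * cθ = -(D₁/2 * |cθ|) := by
          rw [← habs, abs_of_neg (not_le.mp h)]; ring
        rw [this]; ring
    have e1 : D₂/2 - di * cφ - dj * Real.sin φ * Real.sin θ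
        = D₂/2 + D₁/2 * |cφ| + D₁/2 * |ss| := by
      have : dj * Real.sin φ * Real.sin θ = dj * ss := by rw [hss]; ring
      rw [this]; linarith [h1, h2]
    rw [e1, h3]; ring
  · -- upper bound
    rintro v ⟨di, hdi, dj, hdj, dm, hdm, dn, hdn, rfl⟩
    obtain ⟨hdi1, hdi2⟩ := hdi
    obtain ⟨hdj1, hdj2⟩ := hdj
    obtain ⟨hdm1, hdm2⟩ := hdm
    obtain ⟨hdn1, hdn2⟩ := hdn
    have habsi : |di| ≤ D₁/2 := abs_le.mpr ⟨by linarith, hdi2⟩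
    have habsj : |dj| ≤ D₁/2 := abs_le.mpr ⟨by linarith, hdj2⟩
    have habsm : |dm| ≤ D₂/2 := abs_le.mpr ⟨by linarith, hdm2⟩
    have habsn : |dn| ≤ D₂/2 := abs_le.mpr ⟨by linarith, hdn2⟩
    have b1 : |dm - di * cφ - dj * Real.sin φ * Real.sin θ|
        ≤ D₂/2 + D₁/2 * |cφ| + D₁/2 * |ss| := by
      have t1 : |dm - di * cφ - dj * Real.sin φ * Real.sin θ|
          ≤ |dm| + |di * cφ| + |dj * Real.sin φ * Real.sin θ| := by
        calc |dm - di * cφ - dj * Real.sin φ * Real.sin θ|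
            ≤ |dm - di * cφ| + |dj * Real.sin φ * Real.sin θ| := abs_sub _ _
          _ ≤ |dm| + |di * cφ| + |dj * Real.sin φ * Real.sin θ| := by
              linarith [abs_sub dm (di * cφ)]
      have t2 : |di * cφ| ≤ D₁/2 * |cφ| := by
        rw [abs_mul]; exact mul_le_mul_of_nonneg_right habsi (abs_nonneg _)
      have t3 : |dj * Real.sin φ * Real.sin θ| ≤ D₁/2 * |ss| := by
        have : dj * Real.sin φ * Real.sin θ = dj * ss := by rw [hss]; ring
        rw [this, abs_mul]
        exact mul_le_mul_of_nonneg_right habsj (abs_nonneg _)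
      linarith
    have b2 : |dn - dj * cθ| ≤ D₂/2 + D₁/2 * |cθ| := by
      have t2 : |dj * cθ| ≤ D₁/2 * |cθ| := by
        rw [abs_mul]; exact mul_le_mul_of_nonneg_right habsj (abs_nonneg _)
      calc |dn - dj * cθ| ≤ |dn| + |dj * cθ| := abs_sub _ _
        _ ≤ D₂/2 + D₁/2 * |cθ| := by linarith
    have s1 : (dm - di * cφ - dj * Real.sin φ * Real.sin θ) ^ 2
        ≤ (D₂/2 + D₁/2 * |cφ| + D₁/2 * |ss|) ^ 2 := by
      rw [← sq_abs]
      exact pow_le_pow_left₀ (abs_nonneg _) b1 2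
    have s2 : (dn - dj * cθ) ^ 2 ≤ (D₂/2 + D₁/2 * |cθ|) ^ 2 := by
      rw [← sq_abs]
      exact pow_le_pow_left₀ (abs_nonneg _) b2 2
    have : (D₂ + D₁ * (|cφ| + |ss|)) ^ 2 / 4 + (D₂ + D₁ * |cθ|) ^ 2 / 4
        = (D₂/2 + D₁/2 * |cφ| + D₁/2 * |ss|) ^ 2 + (D₂/2 + D₁/2 * |cθ|) ^ 2 := by
      ring
    rw [this]
    linarith
end

section
/- Let r > 0 and v ∈ ℝ³ with ‖v‖ ≤ r/2, and let e be a unit vector in ℝ³. Then ‖r·e - v‖ = r - e·v + (‖v‖² - (e·v)²)/(2r) + E, where the error satisfies |E| ≤ C·‖v‖³/r² for an absolute constant C (e.g., C = 2). -/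
open Real

set_option maxHeartbeats 1000000 in
theorem fresnel_expansion
    (r : ℝ) (hr : 0 < r)
    (e v : EuclideanSpace ℝ (Fin 3))
    (he : ‖e‖ = 1) (hv : ‖v‖ ≤ r / 2) :
    ∃ E : ℝ,
      ‖r • e - v‖
        = r - inner ℝ e v
          + (‖v‖ ^ 2 - (inner ℝ e v : ℝ) ^ 2) / (2 * r) + E
      ∧ |E| ≤ 2 * ‖v‖ ^ 3 / r ^ 2 := by
  set t : ℝ := inner ℝ e v with ht_def
  set n : ℝ := ‖v‖ with hn_def
  have hn0 : 0 ≤ n := norm_nonneg v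
  have ht : |t| ≤ n := by
    calc |t| ≤ ‖e‖ * ‖v‖ := abs_real_inner_le_norm e v
    _ = n := by rw [he]; ring
  have ht1 : t ≤ n := le_trans (le_abs_self t) ht
  have ht1' : -n ≤ t := by
    have := neg_abs_le t
    linarith
  have ht2 : t ^ 2 ≤ n ^ 2 := by nlinarith
  set D : ℝ := ‖r • e - v‖ with hD_def
  clear_value D
  have hD0 : 0 ≤ D := by rw [hD_def]; exact norm_nonneg _
  have hD2 : D ^ 2 = r ^ 2 - 2 * r * t + n ^ 2 := by
    rw [hD_def, hn_def, ht_def, @norm_sub_sq_real (EuclideanSpace ℝ (Fin 3)) _ _ (r • e) v,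
      norm_smul, he, real_inner_smul_left]
    simp [abs_of_pos hr]
    ring
  have hDhalf : r / 2 ≤ D := by nlinarith
  set A : ℝ := r - t + (n ^ 2 - t ^ 2) / (2 * r) with hA_def
  clear_value A
  have hA2r : A * (2 * r) = 2 * r ^ 2 - 2 * r * t + n ^ 2 - t ^ 2 := by
    rw [hA_def]; field_simp; ring
  have h3 : r ^ 2 ≤ A * (2 * r) := by
    rw [hA2r]; nlinarith [mul_le_mul_of_nonneg_left ht1 hr.le]
  have hAhalf : r / 2 ≤ A := by
    have h4 : r ^ 2 / (2 * r) ≤ A := by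
      rw [div_le_iff₀ (by positivity)]; linarith
    calc r / 2 = r ^ 2 / (2 * r) := by field_simp
    _ ≤ A := h4
  refine ⟨D - A, by rw [hA_def]; ring, ?_⟩
  have key : (D - A) * ((D + A) * (4 * r ^ 2)) =
      4 * r * t * (n ^ 2 - t ^ 2) - (n ^ 2 - t ^ 2) ^ 2 := by
    have h1 : (D - A) * ((D + A) * (4 * r ^ 2)) = D ^ 2 * (4 * r ^ 2) - (A * (2 * r)) ^ 2 := by
      ring
    rw [h1, hD2, hA2r]; ring
  have hQ : 4 * r ^ 3 ≤ (D + A) * (4 * r ^ 2) := by nlinarith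
  have hw : 0 ≤ n ^ 2 - t ^ 2 := by linarith
  have hPbound : |4 * r * t * (n ^ 2 - t ^ 2) - (n ^ 2 - t ^ 2) ^ 2| ≤ (9 / 2) * r * n ^ 3 := by
    rw [abs_le]
    constructor
    · nlinarith [mul_le_mul_of_nonneg_left (mul_le_mul_of_nonneg_right
        (by linarith : -t ≤ n) hw) hr.le,
        mul_nonneg hw (sq_nonneg t), mul_nonneg (sq_nonneg t) (sq_nonneg n),
        mul_le_mul_of_nonneg_right hv (by positivity : (0:ℝ) ≤ n ^ 3),
        mul_nonneg hr.le (mul_nonneg hn0 (sq_nonneg t))]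
    · nlinarith [mul_le_mul_of_nonneg_left (mul_le_mul_of_nonneg_right ht1 hw) hr.le,
        mul_nonneg hr.le (mul_nonneg hn0 (sq_nonneg t)), sq_nonneg (n ^ 2 - t ^ 2),
        mul_nonneg hr.le (pow_nonneg hn0 3)]
  have hQ0 : 0 < (D + A) * (4 * r ^ 2) := by
    have : 0 < D + A := by linarith
    positivity
  have h1 : |D - A| * ((D + A) * (4 * r ^ 2)) ≤ (9 / 2) * r * n ^ 3 := by
    calc |D - A| * ((D + A) * (4 * r ^ 2))
        = |(D - A) * ((D + A) * (4 * r ^ 2))| := by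
          rw [abs_mul, abs_of_pos hQ0]
      _ = |4 * r * t * (n ^ 2 - t ^ 2) - (n ^ 2 - t ^ 2) ^ 2| := by rw [key]
      _ ≤ (9 / 2) * r * n ^ 3 := hPbound
  have h2 : |D - A| * (4 * r ^ 3) ≤ (9 / 2) * r * n ^ 3 :=
    le_trans (mul_le_mul_of_nonneg_left hQ (abs_nonneg _)) h1
  rw [le_div_iff₀ (by positivity : (0:ℝ) < r ^ 2)]
  nlinarith [h2, mul_pos hr hr, pow_nonneg hn0 3, abs_nonneg (D - A),
    mul_nonneg (pow_nonneg hn0 3) hr.le]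
end
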